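/- arXiv:2103.16502 — 4 statements merged into one kernel-verified Lean document; each statement's English description precedes it below -/
import Mathlib

section
/- Fix M ≥ 1. Suppose β ≥ 0, γ ≥ 0 and, for all indices i, j, k, q ∈ {1,…,M}: S_i ≥ 0, I_q ≥ 0, R_q ≥ 0, ρ_k ≥ 0, φ_{ik} ≥ 0, α_i ≥ 0, ψ_i ≥ 0, γ + α_i + ψ_i ≤ 1, and N_k := ∑_{q=1}^M φ_{qk}(S_q + I_q + R_q) > 0. Define Ψ_{ii} := β S_i ∑_k ρ_k φ_{ik} φ_{ik} / N_k − (α_i + ψ_i + γ), Ψ_{ij} := β S_i ∑_k ρ_k φ_{ik} φ_{jk} / N_k for i ≠ j, and Γ_{ij} := −β S_i ∑_k ( (ρ_k φ_{ik} φ_{jk} / N_k) · ∑_q (φ_{qk}/N_k) I_q ). Then every entry of the matrix Id + Ψ + Γ is nonnegative. -/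
/-- Fact (c) in the proof of Proposition 1: every entry of the variational transition
matrix `Id + Ψ + Γ` of the SIQHDR network model is nonnegative, where the free-to-move
population satisfies `N_k = ∑_q φ_{qk}(S_q + I_q + R_q) > 0`. -/
theorem stmt_5 (M : ℕ) (hM : 1 ≤ M) (β γ : ℝ) (hβ : 0 ≤ β) (hγ : 0 ≤ γ)
    (S I R ρ α ψ : Fin M → ℝ) (φ : Fin M → Fin M → ℝ) (N : Fin M → ℝ)
    (hS : ∀ i, 0 ≤ S i) (hI : ∀ q, 0 ≤ I q) (hR : ∀ q, 0 ≤ R q)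
    (hρ : ∀ k, 0 ≤ ρ k) (hφ : ∀ i k, 0 ≤ φ i k)
    (hα : ∀ i, 0 ≤ α i) (hψ : ∀ i, 0 ≤ ψ i)
    (hout : ∀ i, γ + α i + ψ i ≤ 1)
    (hNdef : ∀ k, N k = ∑ q, φ q k * (S q + I q + R q))
    (hN : ∀ k, 0 < N k)
    (Ψ Γ : Matrix (Fin M) (Fin M) ℝ)
    (hΨd : ∀ i, Ψ i i = β * S i * (∑ k, ρ k * φ i k * φ i k / N k) - (α i + ψ i + γ))
    (hΨo : ∀ i j, i ≠ j → Ψ i j = β * S i * ∑ k, ρ k * φ i k * φ j k / N k)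
    (hΓ : ∀ i j, Γ i j
      = -(β * S i * ∑ k, (ρ k * φ i k * φ j k / N k) * ∑ q, (φ q k / N k) * I q)) :
    ∀ i j, 0 ≤ ((1 : Matrix (Fin M) (Fin M) ℝ) + Ψ + Γ) i j := by
  intro i j
  -- the fraction of infected among the free-to-move population is in [0,1]
  have hf0 : ∀ k, 0 ≤ ∑ q, (φ q k / N k) * I q := by
    intro k
    exact Finset.sum_nonneg fun q _ =>
      mul_nonneg (div_nonneg (hφ q k) (hN k).le) (hI q)
  have hf1 : ∀ k, ∑ q, (φ q k / N k) * I q ≤ 1 := by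
    intro k
    have : ∑ q, (φ q k / N k) * I q = (∑ q, φ q k * I q) / N k := by
      rw [Finset.sum_div]; exact Finset.sum_congr rfl fun q _ => by ring
    rw [this, div_le_one (hN k)]
    rw [hNdef k]
    exact Finset.sum_le_sum fun q _ => by nlinarith [hφ q k, hS q, hI q, hR q]
  have ht : ∀ k, 0 ≤ ρ k * φ i k * φ j k / N k := fun k =>
    div_nonneg (mul_nonneg (mul_nonneg (hρ k) (hφ i k)) (hφ j k)) (hN k).le
  -- Γ is dominated by the positive part of Ψ
  have hkey : β * S i * (∑ k, (ρ k * φ i k * φ j k / N k) * ∑ q, (φ q k / N k) * I q)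
      ≤ β * S i * ∑ k, ρ k * φ i k * φ j k / N k := by
    apply mul_le_mul_of_nonneg_left _ (mul_nonneg hβ (hS i))
    apply Finset.sum_le_sum
    intro k _
    calc (ρ k * φ i k * φ j k / N k) * ∑ q, (φ q k / N k) * I q
        ≤ (ρ k * φ i k * φ j k / N k) * 1 :=
          mul_le_mul_of_nonneg_left (hf1 k) (ht k)
      _ = ρ k * φ i k * φ j k / N k := mul_one _
  have hsum : 0 ≤ β * S i * (∑ k, ρ k * φ i k * φ j k / N k) :=
    mul_nonneg (mul_nonneg hβ (hS i)) (Finset.sum_nonneg fun k _ => ht k)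
  simp only [Matrix.add_apply, Matrix.one_apply]
  rcases eq_or_ne i j with h | h
  · subst h
    rw [hΨd i, hΓ i i, if_pos rfl]
    have := hout i; have := hα i; have := hψ i
    linarith
  · rw [hΨo i j h, hΓ i j, if_neg h]
    linarith
end

section
/- Fix M ≥ 1, c < 1 and t0 ∈ ℕ. Suppose given, for each time t ∈ ℕ, model quantities β ≥ 0, γ ≥ 0, S_i(t) ≥ 0, I_q(t) ≥ 0, R_q(t) ≥ 0, ρ_k(t) ≥ 0, φ_{ik}(t) ≥ 0, α_i(t) ≥ 0, ψ_i ≥ 0, with γ + α_i(t) + ψ_i ≤ 1 and N_k(t) := ∑_q φ_{qk}(t)(S_q(t) + I_q(t) + R_q(t)) > 0. Define Ψ(t) by Ψ_{ii}(t) := β S_i(t) ∑_k ρ_k(t) φ_{ik}(t)² / N_k(t) − (α_i(t) + ψ_i + γ) and Ψ_{ij}(t) := β S_i(t) ∑_k ρ_k(t) φ_{ik}(t) φ_{jk}(t) / N_k(t) for i ≠ j, and define Γ_{ij}(t) := −β S_i(t) ∑_k ( (ρ_k(t) φ_{ik}(t) φ_{jk}(t) / N_k(t)) · ∑_q (φ_{qk}(t)/N_k(t))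 I_q(t) ). Assume that for every t ≥ t0 and every i, the absolute row sum |1 + Ψ_{ii}(t)| + ∑_{j≠i} |Ψ_{ij}(t)| is at most c. If δI : ℕ → ℝ^M satisfies δI(t+1) = (Id + Ψ(t) + Γ(t)) · δI(t) for all t ≥ t0, then max_i |δI_i(t)| ≤ c^{t−t0} · max_i |δI_i(t0)| for all t ≥ t0. -/
/-- Proposition 1(ii) for the SIQHDR network model with the ℓ∞ norm: if the absolute
row sums of `Id + Ψ(t)` are at most `c < 1` for `t ≥ t0`, then the variations of the
infected, evolving by `δI(t+1) = (Id + Ψ(t) + Γ(t)) δI(t)`, decay geometrically at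
rate `c` in the ℓ∞ norm. -/
theorem stmt_7 (M : ℕ) (hM : 1 ≤ M) (c : ℝ) (hc : c < 1) (t0 : ℕ)
    (β γ : ℝ) (hβ : 0 ≤ β) (hγ : 0 ≤ γ)
    (S I R ρ α : ℕ → Fin M → ℝ) (ψ : Fin M → ℝ)
    (φ : ℕ → Fin M → Fin M → ℝ) (N : ℕ → Fin M → ℝ)
    (hS : ∀ t i, 0 ≤ S t i) (hI : ∀ t q, 0 ≤ I t q) (hR : ∀ t q, 0 ≤ R t q)
    (hρ : ∀ t k, 0 ≤ ρ t k) (hφ : ∀ t i k, 0 ≤ φ t i k)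
    (hα : ∀ t i, 0 ≤ α t i) (hψ : ∀ i, 0 ≤ ψ i)
    (hout : ∀ t i, γ + α t i + ψ i ≤ 1)
    (hNdef : ∀ t k, N t k = ∑ q, φ t q k * (S t q + I t q + R t q))
    (hN : ∀ t k, 0 < N t k)
    (Ψ Γ : ℕ → Matrix (Fin M) (Fin M) ℝ)
    (hΨd : ∀ t i, Ψ t i i
      = β * S t i * (∑ k, ρ t k * φ t i k * φ t i k / N t k) - (α t i + ψ i + γ))
    (hΨo : ∀ t i j, i ≠ j → Ψ t i j = β * S t i * ∑ k, ρ t k * φ t i k * φ t j k / N t k)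
    (hΓ : ∀ t i j, Γ t i j
      = -(β * S t i * ∑ k, (ρ t k * φ t i k * φ t j k / N t k) * ∑ q, (φ t q k / N t k) * I t q))
    (hA : ∀ t ≥ t0, ∀ i : Fin M,
      |1 + Ψ t i i| + ∑ j ∈ Finset.univ.erase i, |Ψ t i j| ≤ c)
    (δI : ℕ → Fin M → ℝ)
    (hδI : ∀ t ≥ t0,
      δI (t + 1) = ((1 : Matrix (Fin M) (Fin M) ℝ) + Ψ t + Γ t).mulVec (δI t)) :
    ∀ t ≥ t0,
      (Finset.univ.sup' (Finset.univ_nonempty_iff.mpr ⟨⟨0, hM⟩⟩) fun i => |δI t i|)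
        ≤ c ^ (t - t0) *
          Finset.univ.sup' (Finset.univ_nonempty_iff.mpr ⟨⟨0, hM⟩⟩) fun i => |δI t0 i| := by
  have hne : (Finset.univ : Finset (Fin M)).Nonempty := Finset.univ_nonempty_iff.mpr ⟨⟨0, hM⟩⟩
  set sup : ℕ → ℝ := fun t => Finset.univ.sup' hne fun i => |δI t i| with hsupdef
  have hc0 : 0 ≤ c :=
    le_trans (add_nonneg (abs_nonneg _) (Finset.sum_nonneg fun j _ => abs_nonneg _))
      (hA t0 le_rfl ⟨0, hM⟩)
  -- fraction bound
  have hfrac0 : ∀ t k, 0 ≤ ∑ q, (φ t q k / N t k) * I t q := by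
    intro t k
    exact Finset.sum_nonneg fun q _ =>
      mul_nonneg (div_nonneg (hφ t q k) (hN t k).le) (hI t q)
  have hfrac : ∀ t k, ∑ q, (φ t q k / N t k) * I t q ≤ 1 := by
    intro t k
    have h1 : ∑ q, φ t q k * I t q ≤ N t k := by
      rw [hNdef]
      apply Finset.sum_le_sum
      intro q _
      have h2 := hS t q; have h3 := hI t q; have h4 := hR t q; have h5 := hφ t q k
      nlinarith
    have hNpos := hN t k
    have heq : ∑ q, (φ t q k / N t k) * I t q = (∑ q, φ t q k * I t q) / N t k := by
      rw [Finset.sum_div]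
      exact Finset.sum_congr rfl fun q _ => by ring
    rw [heq, div_le_one hNpos]; exact h1
  have htermpos : ∀ t i j k, 0 ≤ ρ t k * φ t i k * φ t j k / N t k := fun t i j k =>
    div_nonneg (mul_nonneg (mul_nonneg (hρ t k) (hφ t i k)) (hφ t j k)) (hN t k).le
  have hCpos : ∀ t i j, 0 ≤ β * S t i * ∑ k, ρ t k * φ t i k * φ t j k / N t k :=
    fun t i j => mul_nonneg (mul_nonneg hβ (hS t i))
      (Finset.sum_nonneg fun k _ => htermpos t i j k)
  have hΓle : ∀ t i j, 0 ≤ -Γ t i j ∧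
      -Γ t i j ≤ β * S t i * ∑ k, ρ t k * φ t i k * φ t j k / N t k := by
    intro t i j
    rw [hΓ, neg_neg]
    constructor
    · apply mul_nonneg (mul_nonneg hβ (hS t i))
      exact Finset.sum_nonneg fun k _ => mul_nonneg (htermpos t i j k) (hfrac0 t k)
    · apply mul_le_mul_of_nonneg_left _ (mul_nonneg hβ (hS t i))
      apply Finset.sum_le_sum; intro k _
      calc ρ t k * φ t i k * φ t j k / N t k * ∑ q, (φ t q k / N t k) * I t q
          ≤ ρ t k * φ t i k * φ t j k / N t k * 1 :=
            mul_le_mul_of_nonneg_left (hfrac t k) (htermpos t i j k)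
        _ = ρ t k * φ t i k * φ t j k / N t k := mul_one _
  -- row sums of the full matrix
  have hrow : ∀ t, t0 ≤ t → ∀ i,
      ∑ j, |((1 : Matrix (Fin M) (Fin M) ℝ) + Ψ t + Γ t) i j| ≤ c := by
    intro t ht i
    have hdiag : |((1 : Matrix (Fin M) (Fin M) ℝ) + Ψ t + Γ t) i i| ≤ |1 + Ψ t i i| := by
      have h1 := hΓle t i i
      have h2 := hCpos t i i
      have hd1 := hout t i
      have hd2 := hα t i
      have hd3 := hψ i
      have hΨ := hΨd t i
      have hentry : ((1 : Matrix (Fin M) (Fin M) ℝ) + Ψ t + Γ t) i i = 1 + Ψ t i i + Γ t i i := by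
        simp [Matrix.add_apply, Matrix.one_apply]
      rw [hentry]
      have habs : |1 + Ψ t i i| = 1 + Ψ t i i := abs_of_nonneg (by rw [hΨ]; linarith)
      rw [habs, abs_le]
      constructor <;> [rw [hΨ]; skip] <;> [linarith [h1.1, h1.2]; linarith [h1.1]]
    have hoff : ∀ j ∈ Finset.univ.erase i,
        |((1 : Matrix (Fin M) (Fin M) ℝ) + Ψ t + Γ t) i j| ≤ |Ψ t i j| := by
      intro j hj
      have hij : i ≠ j := fun h => (Finset.mem_erase.mp hj).1 h.symm
      have h1 := hΓle t i j
      have hΨ := hΨo t i j hij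
      have hentry : ((1 : Matrix (Fin M) (Fin M) ℝ) + Ψ t + Γ t) i j = Ψ t i j + Γ t i j := by
        simp [Matrix.add_apply, Matrix.one_apply, hij]
      rw [hentry]
      have habs : |Ψ t i j| = Ψ t i j := abs_of_nonneg (by rw [hΨ]; exact hCpos t i j)
      rw [habs, abs_le]
      constructor <;> [rw [hΨ]; skip]
      · have := hCpos t i j; linarith [h1.1, h1.2]
      · rw [hΨ]; linarith [h1.1]
    calc ∑ j, |((1 : Matrix (Fin M) (Fin M) ℝ) + Ψ t + Γ t) i j|
        = |((1 : Matrix (Fin M) (Fin M) ℝ) + Ψ t + Γ t) i i|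
          + ∑ j ∈ Finset.univ.erase i, |((1 : Matrix (Fin M) (Fin M) ℝ) + Ψ t + Γ t) i j| :=
          (Finset.add_sum_erase _ _ (Finset.mem_univ i)).symm
      _ ≤ |1 + Ψ t i i| + ∑ j ∈ Finset.univ.erase i, |Ψ t i j| :=
          add_le_add hdiag (Finset.sum_le_sum hoff)
      _ ≤ c := hA t ht i
  have hsup0 : ∀ t, 0 ≤ sup t := fun t =>
    le_trans (abs_nonneg _) (Finset.le_sup' (fun i => |δI t i|) (Finset.mem_univ ⟨0, hM⟩))
  have hstep : ∀ t, t0 ≤ t → sup (t + 1) ≤ c * sup t := by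
    intro t ht
    apply Finset.sup'_le
    intro i _
    rw [hδI t ht]
    have hmv : ((1 : Matrix (Fin M) (Fin M) ℝ) + Ψ t + Γ t).mulVec (δI t) i
        = ∑ j, ((1 : Matrix (Fin M) (Fin M) ℝ) + Ψ t + Γ t) i j * δI t j := rfl
    rw [hmv]
    calc |∑ j, ((1 : Matrix (Fin M) (Fin M) ℝ) + Ψ t + Γ t) i j * δI t j|
        ≤ ∑ j, |((1 : Matrix (Fin M) (Fin M) ℝ) + Ψ t + Γ t) i j * δI t j| :=
          Finset.abs_sum_le_sum_abs _ _
      _ = ∑ j, |((1 : Matrix (Fin M) (Fin M) ℝ) + Ψ t + Γ t) i j| * |δI t j| := by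
          exact Finset.sum_congr rfl fun j _ => abs_mul _ _
      _ ≤ ∑ j, |((1 : Matrix (Fin M) (Fin M) ℝ) + Ψ t + Γ t) i j| * sup t := by
          apply Finset.sum_le_sum
          intro j _
          exact mul_le_mul_of_nonneg_left
            (Finset.le_sup' (fun i => |δI t i|) (Finset.mem_univ j)) (abs_nonneg _)
      _ = (∑ j, |((1 : Matrix (Fin M) (Fin M) ℝ) + Ψ t + Γ t) i j|) * sup t := by
          rw [Finset.sum_mul]
      _ ≤ c * sup t := mul_le_mul_of_nonneg_right (hrow t ht i) (hsup0 t)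
  intro t ht
  induction t with
  | zero =>
    have h0 : t0 = 0 := Nat.le_zero.mp ht
    subst h0; simp [hsupdef]
  | succ n ih =>
    rcases Nat.lt_or_ge t0 (n + 1) with h | h
    · have hn : t0 ≤ n := Nat.lt_succ_iff.mp h
      have hpow : n + 1 - t0 = (n - t0) + 1 := by omega
      calc sup (n + 1) ≤ c * sup n := hstep n hn
        _ ≤ c * (c ^ (n - t0) * sup t0) :=
            mul_le_mul_of_nonneg_left (ih hn) hc0
        _ = c ^ (n + 1 - t0) * sup t0 := by rw [hpow, pow_succ]; ring
    · have h0 : t0 = n + 1 := le_antisymm ht h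
      subst h0; simp [hsupdef]
end

section
/- Fix M ≥ 1, c < 1 and t0 ∈ ℕ. Let γ, β ∈ [0,1], and let A be a real M×M matrix with A_{ij} ≥ 0 for all i, j. Suppose the sequence I : ℕ → ℝ^M satisfies 0 ≤ I_i(t) ≤ 1 for all i and t, and evolves according to I(t+1) = ((1−γ)·Id + diag(𝟏−I(t))·β·A)·I(t) for all t ≥ t0. If for all t ≥ t0 one has (1−γ) + (1 − min_i I_i(t))·β·‖A‖ ≤ c, where ‖A‖ is the maximum absolute row sum of A, then max_i |I_i(t)| ≤ c^{t−t0} · max_i |I_i(t0)| for all t ≥ t0. -/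
/-- Bound (B1) of the appendix: along the discrete-time SIS network model
`I(t+1) = ((1−γ)·Id + diag(𝟏−I(t))·β·A)·I(t)`, if
`(1−γ) + (1 − min_i I_i(t))·β·‖A‖ ≤ c < 1` for all `t ≥ t0` (with `‖A‖` the maximum
absolute row sum of `A`), then the infected decay geometrically at rate `c` in ℓ∞. -/
theorem stmt_10 (M : ℕ) (hM : 1 ≤ M) (c : ℝ) (hc : c < 1) (t0 : ℕ)
    (γ β : ℝ) (hγ : γ ∈ Set.Icc (0 : ℝ) 1) (hβ : β ∈ Set.Icc (0 : ℝ) 1)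
    (A : Matrix (Fin M) (Fin M) ℝ) (hA : ∀ i j, 0 ≤ A i j)
    (I : ℕ → Fin M → ℝ) (hI : ∀ t i, 0 ≤ I t i ∧ I t i ≤ 1)
    (hdyn : ∀ t ≥ t0, I (t + 1)
      = (((1 - γ) • (1 : Matrix (Fin M) (Fin M) ℝ)
          + (Matrix.diagonal fun k => 1 - I t k) * (β • A))).mulVec (I t))
    (hbound : ∀ t ≥ t0,
      (1 - γ)
        + (1 - Finset.univ.inf' (Finset.univ_nonempty_iff.mpr ⟨⟨0, hM⟩⟩) (I t)) * β *
          (Finset.univ.sup' (Finset.univ_nonempty_iff.mpr ⟨⟨0, hM⟩⟩) fun i =>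
            ∑ j, |A i j|) ≤ c) :
    ∀ t ≥ t0,
      (Finset.univ.sup' (Finset.univ_nonempty_iff.mpr ⟨⟨0, hM⟩⟩) fun i => |I t i|)
        ≤ c ^ (t - t0) *
          Finset.univ.sup' (Finset.univ_nonempty_iff.mpr ⟨⟨0, hM⟩⟩) fun i => |I t0 i| := by
  obtain ⟨hγ0, hγ1⟩ := hγ
  obtain ⟨hβ0, hβ1⟩ := hβ
  have ne : (Finset.univ : Finset (Fin M)).Nonempty := Finset.univ_nonempty_iff.mpr ⟨⟨0, hM⟩⟩
  set N : ℕ → ℝ := fun t => Finset.univ.sup' ne fun i => |I t i| with hN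
  set S : ℝ := Finset.univ.sup' ne fun i => ∑ j, |A i j| with hS
  set m : ℕ → ℝ := fun t => Finset.univ.inf' ne (I t) with hm
  have hNnn : ∀ t, 0 ≤ N t := fun t => le_trans (abs_nonneg _)
    (Finset.le_sup' (fun i => |I t i|) (Finset.mem_univ ⟨0, hM⟩))
  have hSnn : 0 ≤ S := le_trans (Finset.sum_nonneg fun j _ => abs_nonneg _)
    (Finset.le_sup' (fun i => ∑ j, |A i j|) (Finset.mem_univ ⟨0, hM⟩))
  have hc0 : 0 ≤ c := by
    have hb := hbound t0 le_rfl
    have hm1 : m t0 ≤ 1 := le_trans (Finset.inf'_le _ (Finset.mem_univ ⟨0, hM⟩)) (hI t0 ⟨0, hM⟩).2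
    nlinarith [mul_nonneg hβ0 hSnn]
  -- key step
  have key : ∀ t ≥ t0, N (t + 1) ≤ c * N t := by
    intro t ht
    apply Finset.sup'_le
    intro i _
    have hIm : ∀ j, I t j ≤ N t := fun j => le_trans (le_abs_self _)
      (Finset.le_sup' (fun i => |I t i|) (Finset.mem_univ j))
    have hImn : ∀ j, 0 ≤ I t j := fun j => (hI t j).1
    have hmi : m t ≤ I t i := Finset.inf'_le _ (Finset.mem_univ i)
    have hrow : ∑ j, A i j ≤ S := le_trans (le_of_eq (by
        refine Finset.sum_congr rfl fun j _ => (abs_of_nonneg (hA i j)).symm))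
      (Finset.le_sup' (fun i => ∑ j, |A i j|) (Finset.mem_univ i))
    have hentry : I (t + 1) i = (1 - γ) * I t i + (1 - I t i) * (β * ∑ j, A i j * I t j) := by
      rw [hdyn t ht, Matrix.add_mulVec, Matrix.smul_mulVec, Matrix.one_mulVec,
        ← Matrix.mulVec_mulVec]
      simp [Matrix.mulVec_diagonal, Matrix.mulVec, dotProduct, Finset.mul_sum,
        mul_assoc, mul_left_comm]
    have h1i : 0 ≤ 1 - I t i := by linarith [(hI t i).2]
    have hsum_nn : 0 ≤ ∑ j, A i j * I t j :=
      Finset.sum_nonneg fun j _ => mul_nonneg (hA i j) (hImn j)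
    have habs : |I (t + 1) i| = I (t + 1) i := abs_of_nonneg (by
      rw [hentry]
      have : 0 ≤ (1 - γ) * I t i := mul_nonneg (by linarith) (hImn i)
      positivity)
    rw [habs, hentry]
    have hsum : ∑ j, A i j * I t j ≤ S * N t := by
      calc ∑ j, A i j * I t j ≤ ∑ j, A i j * N t :=
            Finset.sum_le_sum fun j _ => mul_le_mul_of_nonneg_left (hIm j) (hA i j)
        _ = (∑ j, A i j) * N t := (Finset.sum_mul _ _ _).symm
        _ ≤ S * N t := mul_le_mul_of_nonneg_right hrow (hNnn t)
    have h2 : (1 - I t i) * (β * ∑ j, A i j * I t j) ≤ (1 - m t) * β * (S * N t) := by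
      have h1m : 1 - I t i ≤ 1 - m t := by linarith
      have : β * ∑ j, A i j * I t j ≤ β * (S * N t) := mul_le_mul_of_nonneg_left hsum hβ0
      calc (1 - I t i) * (β * ∑ j, A i j * I t j)
          ≤ (1 - m t) * (β * ∑ j, A i j * I t j) :=
            mul_le_mul_of_nonneg_right h1m (mul_nonneg hβ0 hsum_nn)
        _ ≤ (1 - m t) * (β * (S * N t)) := by
            refine mul_le_mul_of_nonneg_left this (by linarith [hmi, hImn i])
        _ = (1 - m t) * β * (S * N t) := by ring
    have h1 : (1 - γ) * I t i ≤ (1 - γ) * N t :=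
      mul_le_mul_of_nonneg_left (hIm i) (by linarith)
    have hb := hbound t ht
    calc (1 - γ) * I t i + (1 - I t i) * (β * ∑ j, A i j * I t j)
        ≤ (1 - γ) * N t + (1 - m t) * β * (S * N t) := by linarith
      _ = ((1 - γ) + (1 - m t) * β * S) * N t := by ring
      _ ≤ c * N t := mul_le_mul_of_nonneg_right hb (hNnn t)
  intro t ht
  induction t, ht using Nat.le_induction with
  | base => simp
  | succ t ht ih =>
    have : t + 1 - t0 = (t - t0) + 1 := by omega
    rw [this, pow_succ]
    calc N (t + 1) ≤ c * N t := key t ht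
      _ ≤ c * (c ^ (t - t0) * N t0) := mul_le_mul_of_nonneg_left ih hc0
      _ = c ^ (t - t0) * c * N t0 := by ring
end

section
/- Fix M ≥ 1, c < 1 and t0 ∈ ℕ. Let γ, β ∈ [0,1], let A be a real M×M matrix with A_{ij} ≥ 0 for all i, j, set P := (1−γ)·Id + β·A, and let v ∈ ℝ^M with v_i ≥ 0 for all i satisfy vᵀ P = λ vᵀ for some real λ with 0 ≤ λ ≤ c. Suppose I : ℕ → ℝ^M satisfies 0 ≤ I_i(t) ≤ 1 for all i, t, and I(t+1) = ((1−γ)·Id + diag(𝟏−I(t))·β·A)·I(t) for all t ≥ t0. Then vᵀ I(t) ≤ c^{t−t0} · (vᵀ I(t0)) for all t ≥ t0. -/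
/-!
Since `I(t) ≥ 0` and `β A ≥ 0`, the factor `diag(𝟏 − I(t))` can only shrink the infection term,
so `I(t+1) ≤ P I(t)` entrywise. Pairing with the nonnegative left eigenvector `v` gives
`vᵀ I(t+1) ≤ vᵀ P I(t) = λ vᵀ I(t) ≤ c vᵀ I(t)`, and the bound follows by iteration.
-/

open Matrix

namespace Matrix

variable {n R : Type*} [Fintype n]

theorem mulVec_nonneg_of_nonneg [Semiring R] [PartialOrder R] [IsOrderedRing R]
    {B : Matrix n n R} (hB : ∀ i j, 0 ≤ B i j) {x : n → R} (hx : 0 ≤ x) : 0 ≤ B *ᵥ x :=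
  fun i => Finset.sum_nonneg fun j _ => mul_nonneg (hB i j) (hx j)

theorem dotProduct_mulVec_of_vecMul_eq_smul [CommSemiring R] {P : Matrix n n R} {v : n → R}
    {l : R} (h : v ᵥ* P = l • v) (x : n → R) : v ⬝ᵥ (P *ᵥ x) = l * (v ⬝ᵥ x) := by
  rw [dotProduct_mulVec, h, smul_dotProduct, smul_eq_mul]

variable [DecidableEq n] [CommRing R] [PartialOrder R] [IsOrderedRing R]

theorem diagonal_one_sub_mul_mulVec_le {B : Matrix n n R} (hB : ∀ i j, 0 ≤ B i j)
    {x : n → R} (hx : 0 ≤ x) : (diagonal (1 - x) * B) *ᵥ x ≤ B *ᵥ x := by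
  intro i
  have hBx := mulVec_nonneg_of_nonneg hB hx i
  rw [← mulVec_mulVec, mulVec_diagonal, Pi.sub_apply, Pi.one_apply, sub_mul, one_mul]
  exact sub_le_self _ (mul_nonneg (hx i) hBx)

theorem add_diagonal_one_sub_mul_mulVec_le (D : Matrix n n R) {B : Matrix n n R}
    (hB : ∀ i j, 0 ≤ B i j) {x : n → R} (hx : 0 ≤ x) :
    (D + diagonal (1 - x) * B) *ᵥ x ≤ (D + B) *ᵥ x := by
  rw [add_mulVec, add_mulVec]
  exact add_le_add_right (diagonal_one_sub_mul_mulVec_le hB hx) _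

end Matrix

theorem stmt_12_general (M : ℕ) (c : ℝ) (t0 : ℕ)
    (γ β : ℝ) (hβ : β ∈ Set.Icc (0 : ℝ) 1)
    (A : Matrix (Fin M) (Fin M) ℝ) (hA : ∀ i j, 0 ≤ A i j)
    (v : Fin M → ℝ) (hv : ∀ i, 0 ≤ v i) (l : ℝ) (hl0 : 0 ≤ l) (hlc : l ≤ c)
    (heig : Matrix.vecMul v ((1 - γ) • (1 : Matrix (Fin M) (Fin M) ℝ) + β • A) = l • v)
    (I : ℕ → Fin M → ℝ) (hI : ∀ t i, 0 ≤ I t i ∧ I t i ≤ 1)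
    (hdyn : ∀ t ≥ t0, I (t + 1)
      = (((1 - γ) • (1 : Matrix (Fin M) (Fin M) ℝ)
          + (Matrix.diagonal fun k => 1 - I t k) * (β • A))).mulVec (I t)) :
    ∀ t ≥ t0, ∑ i, v i * I t i ≤ c ^ (t - t0) * ∑ i, v i * I t0 i := by
  have hβA : ∀ i j, 0 ≤ (β • A) i j := fun i j => mul_nonneg hβ.1 (hA i j)
  have hI0 : ∀ t, 0 ≤ I t := fun t i => (hI t i).1
  have step : ∀ t ≥ t0, v ⬝ᵥ I (t + 1) ≤ c * v ⬝ᵥ I t := fun t ht =>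
    calc v ⬝ᵥ I (t + 1) ≤ v ⬝ᵥ (((1 - γ) • 1 + β • A) *ᵥ I t) := by
          rw [hdyn t ht]
          exact dotProduct_le_dotProduct_of_nonneg_left
            (add_diagonal_one_sub_mul_mulVec_le _ hβA (hI0 t)) hv
      _ = l * v ⬝ᵥ I t := dotProduct_mulVec_of_vecMul_eq_smul heig _
      _ ≤ c * v ⬝ᵥ I t :=
          mul_le_mul_of_nonneg_right hlc (dotProduct_nonneg_of_nonneg hv (hI0 t))
  intro t ht
  obtain ⟨k, rfl⟩ := Nat.exists_eq_add_of_le ht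
  rw [Nat.add_sub_cancel_left]
  exact le_geom (u := fun k => v ⬝ᵥ I (t0 + k)) (hl0.trans hlc) k
    fun j _ => step (t0 + j) (Nat.le_add_right _ _)

/-- Bound (B2) of the appendix: if `v ⪰ 0` is a left eigenvector of
`P = (1−γ)·Id + β·A` with eigenvalue `0 ≤ λ ≤ c < 1`, then along the SIS dynamics
`I(t+1) = ((1−γ)·Id + diag(𝟏−I(t))·β·A)·I(t)` one has
`vᵀ I(t) ≤ c^(t−t0) · vᵀ I(t0)` for all `t ≥ t0`. -/
theorem stmt_12 (M : ℕ) (hM : 1 ≤ M) (c : ℝ) (hc : c < 1) (t0 : ℕ)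
    (γ β : ℝ) (hγ : γ ∈ Set.Icc (0 : ℝ) 1) (hβ : β ∈ Set.Icc (0 : ℝ) 1)
    (A : Matrix (Fin M) (Fin M) ℝ) (hA : ∀ i j, 0 ≤ A i j)
    (v : Fin M → ℝ) (hv : ∀ i, 0 ≤ v i) (l : ℝ) (hl0 : 0 ≤ l) (hlc : l ≤ c)
    (heig : Matrix.vecMul v ((1 - γ) • (1 : Matrix (Fin M) (Fin M) ℝ) + β • A) = l • v)
    (I : ℕ → Fin M → ℝ) (hI : ∀ t i, 0 ≤ I t i ∧ I t i ≤ 1)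
    (hdyn : ∀ t ≥ t0, I (t + 1)
      = (((1 - γ) • (1 : Matrix (Fin M) (Fin M) ℝ)
          + (Matrix.diagonal fun k => 1 - I t k) * (β • A))).mulVec (I t)) :
    ∀ t ≥ t0, ∑ i, v i * I t i ≤ c ^ (t - t0) * ∑ i, v i * I t0 i :=
  stmt_12_general M c t0 γ β hβ A hA v hv l hl0 hlc heig I hI hdyn
end
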